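/- Let g : ℝ → ℝ be any map such that g(x) = x whenever x < −10 or x > 1, and g(x) = h(T₋₁⁻¹(h⁻¹(x))) for all x ∈ [−10, −9.8], where T₋₁⁻¹(x) = 100x + 99 and h⁻¹(y) = 10y for y ≥ 0, h⁻¹(y) = y/10 for y < 0; define g̃ : ℝ → ℝ by g̃(x) = −g(−x). Then K₋ is backward invariant under the generated semigroup: every map f belonging to the submonoid of self-maps of ℝ (under composition) generated by {T₀, T₀⁻¹, g, g̃}, where T₀⁻¹(x) = 100x, satisfies K₋ ⊆ f '' K₋. -/

import Mathlib

noncomputable section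

/-- The affine contraction of ratio 1/100 fixing 0. -/
def T0 (x : ℝ) : ℝ := x / 100

/-- The affine contraction of ratio 1/100 fixing 1. -/
def T1 (x : ℝ) : ℝ := 1 + (x - 1) / 100

/-- The affine contraction of ratio 1/100 fixing -1. -/
def Tm1 (x : ℝ) : ℝ := -1 + (x + 1) / 100

/-- The inverse of `T0`. -/
def T0inv (x : ℝ) : ℝ := 100 * x

/-- The `i`-th iterate of `T0` for `i ≥ 0`, and the `|i|`-th iterate of
`T0⁻¹ : x ↦ 100 x` for `i < 0`. -/
def T0z : ℤ → ℝ → ℝ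
  | Int.ofNat n => T0^[n]
  | Int.negSucc n => T0inv^[n + 1]

/-- The set `K₊ = {0} ∪ ⋃ i ∈ ℤ, T₀^[i] '' (C₁ ∪ C₋₁)` where `C₁ = T₁ '' C`,
`C₋₁ = T₋₁ '' C`. -/
def Kplus (C : Set ℝ) : Set ℝ := {0} ∪ ⋃ i : ℤ, T0z i '' (T1 '' C ∪ Tm1 '' C)

/-- The map `Q : x ↦ x/10`. -/
def Q (x : ℝ) : ℝ := x / 10

/-- The set `K₋ = Q '' K₊`. -/
def Kminus (C : Set ℝ) : Set ℝ := Q '' Kplus C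

/-- The bijection `h` : `x ↦ x/10` for `x ≥ 0`, `x ↦ 10 x` for `x < 0`. -/
def hmap (x : ℝ) : ℝ := if 0 ≤ x then x / 10 else 10 * x

/-- The inverse of `h` : `y ↦ 10 y` for `y ≥ 0`, `y ↦ y/10` for `y < 0`. -/
def hmapInv (y : ℝ) : ℝ := if 0 ≤ y then 10 * y else y / 10

/-- The inverse of `T₋₁` : `x ↦ 100 x + 99`. -/
def Tm1inv (x : ℝ) : ℝ := 100 * x + 99

/-!
Maps `f` with `K₋ ⊆ f '' K₋` form a submonoid, so it suffices to treat the four generators.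
For `T₀^{±1}` this is the invariance of `K₋` under multiplication by powers of `100`.
For `g`, only the points of `K₋ ∩ [-10, 1]` are not fixed; each of them is `h c` for some
`c ∈ C` (because `0 ∈ C` and `T₀ '' C ⊆ C`), and then `x = 10 T₋₁(c)` lies in
`K₋ ∩ [-10, -9.8]` with `g x = h (T₋₁⁻¹ (T₋₁ c)) = h c`. The map `g̃` is `g` conjugated by
`x ↦ -x`, and `-K₋(C) = K₋(-C)` where `-C` is again self-similar, so this case is the previous
one for `-C`.
-/

open Set
open scoped Pointwise

section

variable {α : Type*}

def surjOnSubmonoid (K : Set α) : Submonoid (Function.End α) where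
  carrier := {f | SurjOn f K K}
  one_mem' := surjOn_id K
  mul_mem' hf hg := hf.comp hg

lemma Set.SurjOn.neg_conj [InvolutiveNeg α] {K : Set α} {g : α → α} (h : SurjOn g (-K) (-K)) :
    SurjOn (fun x => -g (-x)) K K := fun y hy => by
  obtain ⟨x, hx, hgx⟩ := h (neg_mem_neg.2 hy)
  exact ⟨-x, hx, by simp [hgx]⟩

end

lemma neg_image_eq_image_neg {f f' : ℝ → ℝ} (h : ∀ x, -f x = f' (-x)) (s : Set ℝ) :
    -(f '' s) = f' '' (-s) := by
  simp only [← image_neg_eq_neg, image_image, h]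

lemma T0_iterate (n : ℕ) (x : ℝ) : T0^[n] x = x / 100 ^ n := by
  induction n with
  | zero => simp
  | succ n ih => rw [Function.iterate_succ_apply', ih, T0, pow_succ, div_div]

lemma T0inv_iterate (n : ℕ) (x : ℝ) : T0inv^[n] x = 100 ^ n * x := by
  induction n with
  | zero => simp
  | succ n ih => rw [Function.iterate_succ_apply', ih, T0inv, pow_succ', mul_assoc]

lemma T0z_apply (i : ℤ) (x : ℝ) : T0z i x = (100 : ℝ) ^ (-i) * x := by
  cases i with
  | ofNat n => simp [T0z, T0_iterate, div_eq_inv_mul]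
  | negSucc n =>
    rw [T0z, T0inv_iterate, Int.neg_negSucc, zpow_natCast]

lemma zpow_mul_mem {C : Set ℝ} (hC : MapsTo T0 C C) {i : ℤ} (hi : i ≤ 0) {c : ℝ}
    (hc : c ∈ C) : (100 : ℝ) ^ i * c ∈ C := by
  obtain ⟨n, rfl⟩ := Int.exists_eq_neg_ofNat hi
  simpa [T0_iterate, div_eq_inv_mul] using hC.iterate n hc

lemma mem_Kminus_iff {C : Set ℝ} {y : ℝ} :
    y ∈ Kminus C ↔
      y = 0 ∨ ∃ i : ℤ, ∃ d ∈ T1 '' C ∪ Tm1 '' C, y = (100 : ℝ) ^ i * d / 10 := by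
  constructor
  · rintro ⟨x, hx | hx, rfl⟩
    · exact Or.inl (by rw [mem_singleton_iff.1 hx, Q, zero_div])
    · obtain ⟨i, d, hd, rfl⟩ := mem_iUnion.1 hx
      exact Or.inr ⟨-i, d, hd, by rw [Q, T0z_apply]⟩
  · rintro (rfl | ⟨i, d, hd, rfl⟩)
    · exact ⟨0, Or.inl rfl, by rw [Q, zero_div]⟩
    · exact ⟨T0z (-i) d, Or.inr (mem_iUnion.2 ⟨-i, mem_image_of_mem _ hd⟩), by
        rw [Q, T0z_apply, neg_neg]⟩

lemma zpow_mul_mem_Kminus {C : Set ℝ} (k : ℤ) {y : ℝ} (hy : y ∈ Kminus C) :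
    (100 : ℝ) ^ k * y ∈ Kminus C := by
  rw [mem_Kminus_iff] at hy ⊢
  rcases hy with rfl | ⟨i, d, hd, rfl⟩
  · exact Or.inl (mul_zero _)
  · refine Or.inr ⟨k + i, d, hd, ?_⟩
    rw [zpow_add₀ (by norm_num)]
    ring

lemma neg_mem_Kminus_neg {C : Set ℝ} {y : ℝ} (hy : y ∈ Kminus C) : -y ∈ Kminus (-C) := by
  rw [mem_Kminus_iff] at hy ⊢
  rcases hy with rfl | ⟨i, d, hd, rfl⟩
  · exact Or.inl neg_zero
  · refine Or.inr ⟨i, -d, ?_, by ring⟩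
    rcases hd with ⟨c, hc, rfl⟩ | ⟨c, hc, rfl⟩
    · exact Or.inr ⟨-c, by simpa using hc, by simp only [T1, Tm1]; ring⟩
    · exact Or.inl ⟨-c, by simpa using hc, by simp only [T1, Tm1]; ring⟩

lemma Kminus_neg (C : Set ℝ) : Kminus (-C) = -Kminus C :=
  Subset.antisymm (fun _ hy => by simpa using neg_mem_Kminus_neg hy)
    (fun _ hy => by simpa using neg_mem_Kminus_neg hy)

lemma surjOn_T0_Kminus (C : Set ℝ) : SurjOn T0 (Kminus C) (Kminus C) :=
  RightInvOn.surjOn (f' := T0inv) (fun y _ => by simp only [T0, T0inv]; ring)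
    (fun y hy => by simpa [T0inv] using zpow_mul_mem_Kminus 1 hy)

lemma surjOn_T0inv_Kminus (C : Set ℝ) : SurjOn T0inv (Kminus C) (Kminus C) :=
  RightInvOn.surjOn (f' := T0) (fun y _ => by simp only [T0, T0inv]; ring)
    (fun y hy => by simpa [T0, div_eq_inv_mul] using zpow_mul_mem_Kminus (-1) hy)

lemma nonpos_of_zpow_mul_le {i : ℤ} {d : ℝ} (hd : 0.98 ≤ d) (h : (100 : ℝ) ^ i * d ≤ 10) :
    i ≤ 0 := by
  by_contra! hi
  have : (100 : ℝ) ≤ 100 ^ i := by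
    simpa using zpow_le_zpow_right₀ (by norm_num : (1 : ℝ) ≤ 100) (by omega : (1 : ℤ) ≤ i)
  nlinarith

def IsSelfSimilar (C : Set ℝ) : Prop := C = Tm1 '' C ∪ T0 '' C ∪ T1 '' C

namespace IsSelfSimilar

variable {C : Set ℝ}

lemma neg (hC : IsSelfSimilar C) : IsSelfSimilar (-C) := by
  have hTm1 : -(Tm1 '' C) = T1 '' (-C) :=
    neg_image_eq_image_neg (fun x => by simp only [Tm1, T1]; ring) C
  have hT0 : -(T0 '' C) = T0 '' (-C) := neg_image_eq_image_neg (fun x => by simp only [T0]; ring) C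
  have hT1 : -(T1 '' C) = Tm1 '' (-C) :=
    neg_image_eq_image_neg (fun x => by simp only [Tm1, T1]; ring) C
  unfold IsSelfSimilar
  conv_lhs => rw [hC]
  rw [union_neg, union_neg, hTm1, hT0, hT1, union_comm _ (Tm1 '' _), union_comm (T1 '' _),
    union_assoc]

lemma mapsTo_T0 (hC : IsSelfSimilar C) : MapsTo T0 C C := fun _ hx => by
  rw [hC]; exact Or.inl (Or.inr (mem_image_of_mem _ hx))

lemma mapsTo_T1 (hC : IsSelfSimilar C) : MapsTo T1 C C := fun _ hx => by
  rw [hC]; exact Or.inr (mem_image_of_mem _ hx)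

lemma mapsTo_Tm1 (hC : IsSelfSimilar C) : MapsTo Tm1 C C := fun _ hx => by
  rw [hC]; exact Or.inl (Or.inl (mem_image_of_mem _ hx))

lemma le_one (hC : IsSelfSimilar C) (hne : C.Nonempty) (hcomp : IsCompact C) :
    ∀ c ∈ C, c ≤ 1 := by
  obtain ⟨M, hMC, hMmax⟩ := hcomp.exists_isMaxOn hne continuous_id.continuousOn
  have hM : M ≤ 1 := by
    rw [hC] at hMC
    rcases hMC with (⟨c, hc, hcM⟩ | ⟨c, hc, hcM⟩) | ⟨c, hc, hcM⟩ <;>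
    · have : c ≤ M := hMmax hc
      simp only [Tm1, T0, T1] at hcM
      linarith
  exact fun c hc => (hMmax hc).trans hM

lemma subset_Icc (hC : IsSelfSimilar C) (hne : C.Nonempty) (hcomp : IsCompact C) :
    C ⊆ Icc (-1) 1 := fun c hc =>
  ⟨neg_le.1 (hC.neg.le_one hne.neg hcomp.neg (-c) (by simpa using hc)),
    hC.le_one hne hcomp c hc⟩

lemma zero_mem (hC : IsSelfSimilar C) (hne : C.Nonempty) (hclosed : IsClosed C) :
    (0 : ℝ) ∈ C := by
  obtain ⟨c, hc⟩ := hne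
  have hmem : ∀ n : ℕ, T0^[n] c ∈ C := fun n => hC.mapsTo_T0.iterate n hc
  have hlim : Filter.Tendsto (fun n : ℕ => T0^[n] c) Filter.atTop (nhds 0) := by
    simp_rw [T0_iterate, div_eq_mul_inv, ← inv_pow]
    simpa using (tendsto_pow_atTop_nhds_zero_of_lt_one (by norm_num : (0 : ℝ) ≤ 100⁻¹)
      (by norm_num)).const_mul c
  exact hclosed.mem_of_tendsto hlim (Filter.Eventually.of_forall hmem)

lemma exists_hmap_eq (hC : IsSelfSimilar C) (hne : C.Nonempty) (hcomp : IsCompact C) {y : ℝ}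
    (hy : y ∈ Kminus C) (hy₁ : -10 ≤ y) (hy₂ : y ≤ 1) : ∃ c ∈ C, hmap c = y := by
  have hIcc := hC.subset_Icc hne hcomp
  rw [mem_Kminus_iff] at hy
  rcases hy with rfl | ⟨i, _, ⟨c, hc, rfl⟩ | ⟨c, hc, rfl⟩, rfl⟩
  · exact ⟨0, hC.zero_mem hne hcomp.isClosed, by simp [hmap]⟩
  · obtain ⟨hc₁, hc₂⟩ := hIcc hc
    have hd : 0.98 ≤ T1 c := by simp only [T1]; linarith
    have hi : i ≤ 0 := nonpos_of_zpow_mul_le hd (by linarith)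
    refine ⟨100 ^ i * T1 c, zpow_mul_mem hC.mapsTo_T0 hi (hC.mapsTo_T1 hc), ?_⟩
    rw [hmap, if_pos (mul_nonneg (by positivity) (by linarith))]
  · obtain ⟨hc₁, hc₂⟩ := hIcc hc
    have hd : 0.98 ≤ -Tm1 c := by simp only [Tm1]; linarith
    have hsplit : (100 : ℝ) ^ i = 100 ^ (i - 1) * 100 := by
      rw [← zpow_add_one₀ (by norm_num), sub_add_cancel]
    have hi : i - 1 ≤ 0 := nonpos_of_zpow_mul_le hd (by rw [hsplit] at hy₁; linarith)
    refine ⟨100 ^ (i - 1) * Tm1 c, zpow_mul_mem hC.mapsTo_T0 hi (hC.mapsTo_Tm1 hc), ?_⟩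
    rw [hmap, if_neg (not_le.2 (mul_neg_of_pos_of_neg (by positivity) (by linarith))), hsplit]
    ring

lemma surjOn_Kminus (hC : IsSelfSimilar C) (hne : C.Nonempty) (hcomp : IsCompact C)
    {g : ℝ → ℝ} (hg_id : ∀ x : ℝ, x < -10 ∨ 1 < x → g x = x)
    (hg_left : ∀ x ∈ Icc (-10 : ℝ) (-9.8), g x = hmap (Tm1inv (hmapInv x))) :
    SurjOn g (Kminus C) (Kminus C) := by
  intro y hy
  by_cases hy' : y < -10 ∨ 1 < y
  · exact ⟨y, hy, hg_id y hy'⟩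
  simp only [not_or, not_lt] at hy'
  obtain ⟨c, hc, rfl⟩ := hC.exists_hmap_eq hne hcomp hy hy'.1 hy'.2
  obtain ⟨hc₁, hc₂⟩ := hC.subset_Icc hne hcomp hc
  have hx : 10 * Tm1 c ∈ Kminus C :=
    mem_Kminus_iff.2 (Or.inr ⟨1, Tm1 c, Or.inr (mem_image_of_mem _ hc), by ring⟩)
  refine ⟨10 * Tm1 c, hx, ?_⟩
  have hx' : 10 * Tm1 c ∈ Icc (-10 : ℝ) (-9.8) := by
    simp only [Tm1, mem_Icc]; constructor <;> linarith
  rw [hg_left _ hx', hmapInv, if_neg (by simp only [Tm1]; linarith)]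
  congr 1
  simp only [Tm1inv, Tm1]
  ring

end IsSelfSimilar

theorem stmt_15 (C : Set ℝ) (hne : C.Nonempty) (hcomp : IsCompact C)
    (hself : C = Tm1 '' C ∪ T0 '' C ∪ T1 '' C)
    (g : ℝ → ℝ)
    (hg_id : ∀ x : ℝ, x < -10 ∨ 1 < x → g x = x)
    (hg_left : ∀ x ∈ Set.Icc (-10 : ℝ) (-9.8 : ℝ), g x = hmap (Tm1inv (hmapInv x))) :
    ∀ f ∈ Submonoid.closure ({T0, T0inv, g, fun x => -g (-x)} : Set (Function.End ℝ)),
      Kminus C ⊆ f '' Kminus C := by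
  have hC : IsSelfSimilar C := hself
  intro f hf
  refine (Submonoid.closure_le (S := surjOnSubmonoid (Kminus C))).2 ?_ hf
  rintro _ (rfl | rfl | rfl | rfl)
  · exact surjOn_T0_Kminus C
  · exact surjOn_T0inv_Kminus C
  · exact hC.surjOn_Kminus hne hcomp hg_id hg_left
  · refine SurjOn.neg_conj ?_
    rw [← Kminus_neg]
    exact hC.neg.surjOn_Kminus hne.neg hcomp.neg hg_id hg_left
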